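/- Let m = p_1^{k_1} p_2^{k_2} ⋯ p_h^{k_h} be the prime factorization of m ≥ 2 (distinct primes p_i, k_i ≥ 1), let T_f be a surjective linear cellular automaton on (ZMod m)^ℤ, and for each i let T_{p_i^{k_i}} be the linear cellular automaton on (ZMod p_i^{k_i})^ℤ whose local rule is f reduced modulo p_i^{k_i}. Then T_f is ergodic with respect to the uniform Bernoulli measure on (ZMod m)^ℤ if and only if T_{p_i^{k_i}} is ergodic with respect to the uniform Bernoulli measure on (ZMod p_i^{k_i})^ℤ for every 1 ≤ i ≤ h. -/

import Mathlib

open MeasureTheory Filter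

/-- The linear cellular automaton on `(ZMod m)^ℤ` with local rule
`f(x_l, …, x_r) = Σ_{j=l}^{r} λ_j x_j (mod m)`. -/
noncomputable def cellAuto (m : ℕ) (l r : ℤ) (lam : ℤ → ZMod m) :
    (ℤ → ZMod m) → (ℤ → ZMod m) :=
  fun x i => ∑ j ∈ Finset.Icc l r, lam j * x (i + j)

/-- `μ` is the uniform Bernoulli measure on `(ZMod d)^ℤ`: the infinite product over `ℤ`
of the uniform probability measure on `ZMod d`, characterized by its values on cylinders. -/
def IsUniformBernoulli (d : ℕ) (μ : Measure (ℤ → ZMod d)) : Prop :=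
  IsProbabilityMeasure μ ∧
    ∀ (s : Finset ℤ) (a : ℤ → ZMod d),
      μ {x | ∀ i ∈ s, x i = a i} = ((d : ENNReal))⁻¹ ^ s.card

/-- `T` is ergodic with respect to `μ`: every measurable `T`-invariant set is null or conull. -/
def IsErgodic {X : Type*} [MeasurableSpace X] (T : X → X) (μ : Measure X) : Prop :=
  ∀ A : Set X, MeasurableSet A → T ⁻¹' A = A → μ A = 0 ∨ μ A = 1

/-!
Pairing a configuration `x` with a finitely supported coefficient vector `c` gives the characters
`χ_c x = exp (2πi ⟨c, x⟩ / d)`, and `χ_c ∘ T = χ_{F c}` for the transpose `F` of `T = T_f`.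
Ergodicity of a surjective `T` is equivalent to `F` having no nonzero periodic point: a periodic
orbit sums to a nonconstant invariant function, while for aperiodic `F` Bessel's inequality kills
every nontrivial Fourier coefficient of an invariant set `A`, which forces `μ|_A = μ A • μ`.
Aperiodicity modulo each `p ^ k ∥ m` gives aperiodicity over `ZMod m` by the Chinese remainder
theorem. The forward implication is simpler: `T_{p^k}` is a factor of `T_f` via reduction modulo
`p ^ k`, which maps the uniform Bernoulli measure to the uniform Bernoulli measure.
-/

open Function Set

section Cylinders

variable {d : ℕ}

def cyl (s : Finset ℤ) (a : ℤ → ZMod d) : Set (ℤ → ZMod d) := {x | ∀ i ∈ s, x i = a i}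

lemma cyl_eq_cylinder (s : Finset ℤ) (a : ℤ → ZMod d) :
    cyl s a = cylinder (α := fun _ => ZMod d) s {s.restrict a} := by
  ext x
  simp [cyl, funext_iff]

lemma measurableSet_cyl (s : Finset ℤ) (a : ℤ → ZMod d) : MeasurableSet (cyl s a) := by
  rw [cyl_eq_cylinder]
  exact .cylinder s (measurableSet_singleton _)

lemma exists_cyl_eq_cylinder_singleton (s : Finset ℤ) (w : s → ZMod d) :
    ∃ a, cyl s a = cylinder (α := fun _ => ZMod d) s {w} := by
  classical
  refine ⟨fun i => if h : i ∈ s then w ⟨i, h⟩ else 0, ?_⟩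
  rw [cyl_eq_cylinder]
  congr
  ext i
  simp

lemma preimage_add_right_cyl (y : ℤ → ZMod d) (s : Finset ℤ) (a : ℤ → ZMod d) :
    (· + y) ⁻¹' cyl s a = cyl s (a - y) := by
  ext x
  simp [cyl, eq_sub_iff_add_eq]

lemma pairwise_disjoint_cylinder_singleton (s : Finset ℤ) :
    Pairwise (Disjoint on fun w : s → ZMod d => cylinder (α := fun _ => ZMod d) s {w}) := by
  intro w w' hne
  refine Set.disjoint_left.2 fun x hx hx' => hne ?_
  simp only [mem_cylinder, mem_singleton_iff] at hx hx'
  rw [← hx, hx']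

lemma MeasureTheory.Measure.ext_of_cyl [NeZero d] {ν ν' : Measure (ℤ → ZMod d)}
    [IsFiniteMeasure ν] (h : ∀ s a, ν (cyl s a) = ν' (cyl s a)) : ν = ν' := by
  refine ext_of_generate_finite _ generateFrom_measurableCylinders.symm
    isPiSystem_measurableCylinders ?_ (by simpa [cyl] using h ∅ 0)
  intro t ht
  obtain ⟨s, S, -, rfl⟩ := (mem_measurableCylinders t).1 ht
  have hS : cylinder s S = ⋃ w ∈ S, cylinder (α := fun _ => ZMod d) s {w} := by
    ext x
    simp
  have hdisj := (pairwise_disjoint_cylinder_singleton s).set_pairwise S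
  have hmeas : ∀ w ∈ S, MeasurableSet (cylinder (α := fun _ => ZMod d) s {w}) :=
    fun _ _ => .cylinder s (measurableSet_singleton _)
  rw [hS, measure_biUnion S.to_countable hdisj hmeas, measure_biUnion S.to_countable hdisj hmeas]
  congr with w
  obtain ⟨a, ha⟩ := exists_cyl_eq_cylinder_singleton s (w : s → ZMod d)
  rw [← ha, h]

end Cylinders

namespace IsUniformBernoulli

variable {d m : ℕ} {μ ν : Measure (ℤ → ZMod d)}

lemma unique [NeZero d] (hμ : IsUniformBernoulli d μ) (hν : IsUniformBernoulli d ν) : μ = ν :=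
  have := hμ.1
  Measure.ext_of_cyl fun s a => (hμ.2 s a).trans (hν.2 s a).symm

lemma map_add_right [NeZero d] (hμ : IsUniformBernoulli d μ) (y : ℤ → ZMod d) :
    μ.map (· + y) = μ := by
  have := hμ.1
  refine unique ⟨Measure.isProbabilityMeasure_map (measurable_add_const y).aemeasurable,
    fun s a => ?_⟩ hμ
  change μ.map _ (cyl s a) = _
  rw [Measure.map_apply (measurable_add_const y) (measurableSet_cyl s a)]
  exact (congrArg μ (preimage_add_right_cyl y s a)).trans (hμ.2 s (a - y))

/-- The `d ^ #s` translates of a cylinder over `s` partition the space and have equal measure. -/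
lemma of_map_add_right [NeZero d] (hν : IsProbabilityMeasure ν)
    (h : ∀ y, ν.map (· + y) = ν) : IsUniformBernoulli d ν := by
  refine ⟨hν, fun s a => ?_⟩
  have hconst : ∀ a, ν (cyl s a) = ν (cyl s 0) := fun a => by
    conv_rhs => rw [← h (-a)]
    rw [Measure.map_apply (measurable_add_const _) (measurableSet_cyl s 0),
      preimage_add_right_cyl, zero_sub, neg_neg]
  have hcover : ⋃ w : s → ZMod d, cylinder (α := fun _ => ZMod d) s {w} = univ := by
    ext x
    simp
  have hsum : (d : ENNReal) ^ s.card * ν (cyl s 0) = 1 := by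
    rw [← measure_univ (μ := ν), ← hcover, measure_iUnion (pairwise_disjoint_cylinder_singleton s)
      fun _ => .cylinder s (measurableSet_singleton _), tsum_fintype]
    have hw : ∀ w : s → ZMod d, ν (cylinder (α := fun _ => ZMod d) s {w}) = ν (cyl s 0) := by
      intro w
      obtain ⟨a, ha⟩ := exists_cyl_eq_cylinder_singleton s w
      rw [← ha, hconst]
    simp [hw, Finset.card_univ, ZMod.card]
  rw [show {x | ∀ i ∈ s, x i = a i} = cyl s a from rfl, hconst, ← ENNReal.inv_pow]
  exact ENNReal.eq_inv_of_mul_eq_one_left (by rwa [mul_comm])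

lemma map_of_surjective [NeZero m] [NeZero d] {μ : Measure (ℤ → ZMod m)}
    (hμ : IsUniformBernoulli m μ) (φ : (ℤ → ZMod m) →+ (ℤ → ZMod d)) (hφ : Surjective φ)
    (hφm : Measurable φ) : IsUniformBernoulli d (μ.map φ) := by
  have := hμ.1
  refine of_map_add_right (Measure.isProbabilityMeasure_map hφm.aemeasurable) fun y => ?_
  obtain ⟨x, rfl⟩ := hφ y
  have hcomm : (· + φ x) ∘ φ = φ ∘ (· + x) := funext fun z => (map_add φ z x).symm
  rw [Measure.map_map (measurable_add_const _) hφm, hcomm,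
    ← Measure.map_map hφm (measurable_add_const _), hμ.map_add_right]

end IsUniformBernoulli

section CellularAutomaton

variable {d m : ℕ} (l r : ℤ) (lam : ℤ → ZMod d)

noncomputable def cellAutoHom : (ℤ → ZMod d) →+ (ℤ → ZMod d) :=
  AddMonoidHom.mk' (cellAuto d l r lam) fun x y => by
    funext i
    simp [cellAuto, mul_add, Finset.sum_add_distrib]

lemma measurable_cellAuto [NeZero d] : Measurable (cellAuto d l r lam) := by
  refine measurable_pi_lambda _ fun i => ?_
  have hwindow : Measurable fun (x : ℤ → ZMod d) (j : Finset.Icc l r) => x (i + j) :=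
    measurable_pi_lambda _ fun j => measurable_pi_apply _
  convert (measurable_of_countable
    fun w : Finset.Icc l r → ZMod d => ∑ j : Finset.Icc l r, lam j * w j).comp hwindow using 1
  funext x
  exact (Finset.sum_coe_sort _ fun j => lam j * x (i + j)).symm

lemma IsUniformBernoulli.map_cellAuto [NeZero d] {μ : Measure (ℤ → ZMod d)}
    (hμ : IsUniformBernoulli d μ) (hsurj : Surjective (cellAuto d l r lam)) :
    μ.map (cellAuto d l r lam) = μ :=
  (hμ.map_of_surjective (cellAutoHom l r lam) hsurj (measurable_cellAuto l r lam)).unique hμ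

def reduceMod (h : d ∣ m) : (ℤ → ZMod m) →+ (ℤ → ZMod d) :=
  (ZMod.castHom h (ZMod d)).toAddMonoidHom.compLeft ℤ

lemma measurable_reduceMod (h : d ∣ m) : Measurable (reduceMod h) :=
  measurable_pi_lambda _ fun i => Measurable.of_discrete.comp (measurable_pi_apply i)

lemma IsUniformBernoulli.map_reduceMod [NeZero m] [NeZero d] {μ : Measure (ℤ → ZMod m)}
    (hμ : IsUniformBernoulli m μ) (h : d ∣ m) : IsUniformBernoulli d (μ.map (reduceMod h)) :=
  hμ.map_of_surjective _ (ZMod.ringHom_surjective (ZMod.castHom h (ZMod d))).comp_left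
    (measurable_reduceMod h)

lemma semiconj_reduceMod_cellAuto (h : d ∣ m) (lam : ℤ → ZMod m) :
    Semiconj (reduceMod h) (cellAuto m l r lam)
      (cellAuto d l r fun i => ZMod.castHom h (ZMod d) (lam i)) := by
  intro x
  funext i
  change ZMod.castHom h (ZMod d) (cellAuto m l r lam x i) = _
  simp only [cellAuto, map_sum, map_mul]
  rfl

/-- The transpose of `cellAuto d l r lam`, acting on finitely supported coefficient vectors. -/
noncomputable def dualCA : (ℤ →₀ ZMod d) →ₗ[ZMod d] (ℤ →₀ ZMod d) :=
  ∑ j ∈ Finset.Icc l r, lam j • Finsupp.lmapDomain (ZMod d) (ZMod d) (· + j)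

lemma dualCA_apply (c : ℤ →₀ ZMod d) (k : ℤ) :
    dualCA l r lam c k = ∑ j ∈ Finset.Icc l r, lam j * c (k - j) := by
  simp only [dualCA, LinearMap.sum_apply, LinearMap.smul_apply, Finsupp.lmapDomain_apply,
    Finsupp.finsetSum_apply, Finsupp.smul_apply, smul_eq_mul]
  refine Finset.sum_congr rfl fun j _ => ?_
  have := Finsupp.mapDomain_apply (add_left_injective j) c (k - j)
  rw [sub_add_cancel] at this
  rw [this]

lemma linearCombination_dualCA (x : ℤ → ZMod d) (c : ℤ →₀ ZMod d) :
    Finsupp.linearCombination (ZMod d) x (dualCA l r lam c) =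
      Finsupp.linearCombination (ZMod d) (cellAuto d l r lam x) c := by
  simp only [dualCA, LinearMap.sum_apply, map_sum, LinearMap.smul_apply, map_smul,
    Finsupp.lmapDomain_apply, Finsupp.linearCombination_mapDomain]
  simp only [Finsupp.linearCombination_apply, Finsupp.sum, cellAuto, smul_eq_mul, Finset.mul_sum]
  rw [Finset.sum_comm]
  refine Finset.sum_congr rfl fun i _ => Finset.sum_congr rfl fun j _ => ?_
  simp only [comp_apply]
  ring

lemma linearCombination_pi_single (c : ℤ →₀ ZMod d) (i : ℤ) :
    Finsupp.linearCombination (ZMod d) (Pi.single i 1) c = c i := by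
  simp [Finsupp.linearCombination_apply, Finsupp.sum, Pi.single_apply]
  exact fun h => h.symm

lemma dualCA_injective (hsurj : Surjective (cellAuto d l r lam)) :
    Injective (dualCA l r lam) := by
  intro c c' hcc'
  ext i
  obtain ⟨x, hx⟩ := hsurj (Pi.single i 1)
  simpa [linearCombination_dualCA, hx, linearCombination_pi_single] using
    congrArg (Finsupp.linearCombination (ZMod d) x) hcc'

noncomputable def reduceModCoeff (h : d ∣ m) : (ℤ →₀ ZMod m) →+ (ℤ →₀ ZMod d) :=
  Finsupp.mapRange.addMonoidHom (ZMod.castHom h (ZMod d)).toAddMonoidHom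

lemma semiconj_reduceModCoeff_dualCA (h : d ∣ m) (lam : ℤ → ZMod m) :
    Semiconj (reduceModCoeff h) (dualCA l r lam)
      (dualCA l r fun i => ZMod.castHom h (ZMod d) (lam i)) := by
  intro c
  ext k
  change ZMod.castHom h (ZMod d) (dualCA l r lam c k) = _
  simp only [dualCA_apply, map_sum, map_mul]
  rfl

end CellularAutomaton

lemma AddChar.map_sum_eq_prod {A M ι : Type*} [AddCommMonoid A] [CommMonoid M] (ψ : AddChar A M)
    (s : Finset ι) (f : ι → A) : ψ (∑ i ∈ s, f i) = ∏ i ∈ s, ψ (f i) := by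
  classical
  induction s using Finset.induction_on with
  | empty => simp
  | insert i s hi ih => rw [Finset.sum_insert hi, Finset.prod_insert hi, ψ.map_add_eq_mul, ih]

section Characters

variable {d : ℕ} [NeZero d]

noncomputable def character (c : ℤ →₀ ZMod d) (x : ℤ → ZMod d) : ℂ :=
  ZMod.stdAddChar (Finsupp.linearCombination (ZMod d) x c)

lemma character_zero_left (x : ℤ → ZMod d) : character 0 x = 1 := by
  simp [character]

lemma character_add_left (c c' : ℤ →₀ ZMod d) (x : ℤ → ZMod d) :
    character (c + c') x = character c x * character c' x := by
  simp [character, AddChar.map_add_eq_mul]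

lemma character_neg_left (c : ℤ →₀ ZMod d) (x : ℤ → ZMod d) :
    character (-c) x = starRingEnd ℂ (character c x) := by
  simp [character, AddChar.map_neg_eq_conj]

lemma character_add_right (c : ℤ →₀ ZMod d) (x y : ℤ → ZMod d) :
    character c (x + y) = character c x * character c y := by
  simp [character, Finsupp.linearCombination_apply, Finsupp.sum, mul_add, Finset.sum_add_distrib,
    AddChar.map_add_eq_mul]

lemma norm_character (c : ℤ →₀ ZMod d) (x : ℤ → ZMod d) : ‖character c x‖ = 1 :=
  AddChar.norm_apply _ _

lemma character_cellAuto (l r : ℤ) (lam : ℤ → ZMod d) (c : ℤ →₀ ZMod d) (x : ℤ → ZMod d) :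
    character c (cellAuto d l r lam x) = character (dualCA l r lam c) x := by
  rw [character, character, linearCombination_dualCA]

lemma measurable_character (c : ℤ →₀ ZMod d) : Measurable (character c) := by
  have hrestrict : Measurable fun (x : ℤ → ZMod d) (i : c.support) => x i :=
    measurable_pi_lambda _ fun i => measurable_pi_apply _
  convert (measurable_of_countable fun w : c.support → ZMod d =>
    (ZMod.stdAddChar (∑ i : c.support, c i * w i) : ℂ)).comp hrestrict using 1
  funext x
  simp only [character, Finsupp.linearCombination_apply, Finsupp.sum, smul_eq_mul, comp_apply]
  rw [Finset.sum_coe_sort c.support fun i => c i * x i]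

variable {μ : Measure (ℤ → ZMod d)}

lemma memLp_character [IsFiniteMeasure μ] (c : ℤ →₀ ZMod d) : MemLp (character c) 2 μ :=
  .of_bound (measurable_character c).aestronglyMeasurable 1
    (ae_of_all _ fun x => (norm_character c x).le)

lemma integrable_character [IsFiniteMeasure μ] (c : ℤ →₀ ZMod d) :
    Integrable (character c) μ :=
  (memLp_character c).integrable one_le_two

/-- Translating by `Pi.single i 1`, where `c i ≠ 0`, multiplies the integral by a root of unity
different from `1`. -/
lemma IsUniformBernoulli.integral_character (hμ : IsUniformBernoulli d μ) (c : ℤ →₀ ZMod d) :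
    ∫ x, character c x ∂μ = if c = 0 then 1 else 0 := by
  have := hμ.1
  split_ifs with hc
  · simp [hc, character_zero_left]
  obtain ⟨i, hi⟩ : ∃ i, c i ≠ 0 := by
    by_contra! h
    exact hc (Finsupp.ext h)
  set y : ℤ → ZMod d := Pi.single i 1
  have hy : character c y ≠ 1 := by
    rw [character, linearCombination_pi_single, ← (ZMod.stdAddChar (N := d)).map_zero_eq_one]
    exact fun h => hi (ZMod.injective_stdAddChar h)
  have hshift : ∫ x, character c x ∂μ = (∫ x, character c x ∂μ) * character c y := by
    have hpres : MeasurePreserving (MeasurableEquiv.addRight y) μ μ :=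
      ⟨measurable_add_const y, hμ.map_add_right y⟩
    rw [← integral_mul_const, ← hpres.integral_comp']
    simp [character_add_right]
  have h : (∫ x, character c x ∂μ) * (character c y - 1) = 0 := by
    rw [mul_sub, mul_one, ← hshift, sub_self]
  exact (mul_eq_zero.1 h).resolve_right (sub_ne_zero.2 hy)

/-- From `∑ t, ψ (t * b) = d • [b = 0]` in each coordinate of `s`. -/
lemma indicator_cyl_eq_sum_character (s : Finset ℤ) (a x : ℤ → ZMod d) :
    (cyl s a).indicator 1 x = ((d : ℂ) ^ s.card)⁻¹ *
      ∑ γ : s → ZMod d, character (∑ i : s, Finsupp.single (i : ℤ) (γ i)) (x - a) := by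
  classical
  have hcoord : ∀ i, (if x i = a i then (1 : ℂ) else 0) =
      (d : ℂ)⁻¹ * ∑ t : ZMod d, ZMod.stdAddChar (t * (x i - a i)) := by
    intro i
    rw [AddChar.sum_mulShift _ (ZMod.isPrimitive_stdAddChar d), ZMod.card]
    by_cases h : x i = a i <;> simp [h, sub_eq_zero, NeZero.ne d]
  calc (cyl s a).indicator 1 x = ∏ i ∈ s, (if x i = a i then (1 : ℂ) else 0) := by
        simp [Finset.prod_boole, Set.indicator_apply, cyl]
    _ = ∏ i : s, (d : ℂ)⁻¹ * ∑ t : ZMod d, ZMod.stdAddChar (t * (x i - a i)) := by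
        rw [← Finset.prod_coe_sort]
        exact Finset.prod_congr rfl fun i _ => hcoord i
    _ = ((d : ℂ) ^ s.card)⁻¹ *
          ∑ γ : s → ZMod d, ∏ i : s, ZMod.stdAddChar (γ i * (x i - a i)) := by
        rw [Finset.prod_mul_distrib, Finset.prod_const, Finset.card_univ, Fintype.card_coe,
          inv_pow, Finset.prod_univ_sum, Fintype.piFinset_univ]
    _ = _ := by
        congr 1
        refine Finset.sum_congr rfl fun γ _ => ?_
        simp [character, map_sum, AddChar.map_sum_eq_prod]

lemma MeasureTheory.Measure.ext_of_integral_character {ν ν' : Measure (ℤ → ZMod d)}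
    [IsFiniteMeasure ν] [IsFiniteMeasure ν']
    (h : ∀ c, ∫ x, character c x ∂ν = ∫ x, character c x ∂ν') : ν = ν' := by
  refine Measure.ext_of_cyl fun s a => ?_
  have hexpand : ∀ (ρ : Measure (ℤ → ZMod d)) [IsFiniteMeasure ρ], (ρ.real (cyl s a) : ℂ) =
      ((d : ℂ) ^ s.card)⁻¹ * ∑ γ : s → ZMod d,
        (∫ x, character (∑ i : s, Finsupp.single (i : ℤ) (γ i)) x ∂ρ) *
          character (∑ i : s, Finsupp.single (i : ℤ) (γ i)) (-a) := by
    intro ρ _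
    have hind : (ρ.real (cyl s a) : ℂ) = ∫ x, (cyl s a).indicator 1 x ∂ρ := by
      rw [show ((cyl s a).indicator 1 : _ → ℂ) = (cyl s a).indicator fun _ => (1 : ℂ) from rfl,
        integral_indicator_const _ (measurableSet_cyl s a), Complex.real_smul, mul_one]
    simp_rw [hind, indicator_cyl_eq_sum_character, sub_eq_add_neg, character_add_right]
    rw [integral_const_mul, integral_finsetSum _ fun γ _ => (integrable_character _).mul_const _]
    simp_rw [integral_mul_const]
  have hreal : (ν.real (cyl s a) : ℂ) = ν'.real (cyl s a) := by
    rw [hexpand ν, hexpand ν']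
    simp_rw [h]
  rw [← ENNReal.ofReal_toReal (measure_ne_top ν _), ← ENNReal.ofReal_toReal (measure_ne_top ν' _)]
  exact congrArg ENNReal.ofReal (Complex.ofReal_injective hreal)

noncomputable def characterLp (μ : Measure (ℤ → ZMod d)) [IsFiniteMeasure μ] (c : ℤ →₀ ZMod d) :
    Lp ℂ 2 μ :=
  (memLp_character c).toLp

lemma IsUniformBernoulli.orthonormal_characterLp [IsFiniteMeasure μ]
    (hμ : IsUniformBernoulli d μ) : Orthonormal ℂ (characterLp μ) := by
  rw [orthonormal_iff_ite]
  intro c c'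
  have hae : ∀ᵐ x ∂μ,
      inner ℂ (characterLp μ c x) (characterLp μ c' x) = character (-c + c') x := by
    filter_upwards [(memLp_character (μ := μ) c).coeFn_toLp,
      (memLp_character (μ := μ) c').coeFn_toLp] with x hc hc'
    rw [characterLp, characterLp, hc, hc', RCLike.inner_apply', ← character_neg_left,
      ← character_add_left]
  rw [L2.inner_def, integral_congr_ae hae, hμ.integral_character]
  simp only [neg_add_eq_zero]

lemma inner_indicatorConstLp_characterLp [IsFiniteMeasure μ] {A : Set (ℤ → ZMod d)}
    (hA : MeasurableSet A) (c : ℤ →₀ ZMod d) :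
    inner ℂ (indicatorConstLp 2 hA (measure_ne_top μ A) (1 : ℂ)) (characterLp μ c) =
      ∫ x in A, character c x ∂μ := by
  rw [L2.inner_indicatorConstLp_one]
  exact integral_congr_ae (ae_restrict_of_ae (memLp_character c).coeFn_toLp)

end Characters

/-- Bessel's inequality makes the inner products square-summable. -/
lemma Orthonormal.eq_zero_of_forall_inner_eq {𝕜 E ι : Type*} [RCLike 𝕜] [NormedAddCommGroup E]
    [InnerProductSpace 𝕜 E] [Infinite ι] {v : ι → E} (hv : Orthonormal 𝕜 v) (x : E) {a : 𝕜}
    (h : ∀ i, inner 𝕜 x (v i) = a) : a = 0 := by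
  have hsum := hv.inner_products_summable x
  simp_rw [norm_inner_symm, h] at hsum
  simpa using (summable_const_iff _).1 hsum

lemma Function.injective_iterate_of_notMem_periodicPts {α : Type*} {f : α → α}
    (hf : Injective f) {x : α} (hx : x ∉ periodicPts f) : Injective fun n => f^[n] x := by
  refine Injective.of_lt_imp_ne fun i j hij hfij => hx ⟨j - i, by omega, ?_⟩
  apply hf.iterate i
  rw [← iterate_add_apply, Nat.add_sub_cancel' hij.le]
  exact hfij.symm

lemma IsErgodic.preErgodic {X : Type*} [MeasurableSpace X] {T : X → X} {μ : Measure X}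
    [IsProbabilityMeasure μ] (h : IsErgodic T μ) : PreErgodic T μ where
  aeconst_set _ hs hinv := eventuallyConst_set'.2 <|
    (h _ hs hinv).imp ae_eq_empty.2 fun h1 => ae_eq_univ.2 ((prob_compl_eq_zero_iff hs).2 h1)

lemma IsErgodic.of_semiconj {X Y : Type*} [MeasurableSpace X] [MeasurableSpace Y] {T : X → X}
    {S : Y → Y} {π : X → Y} {μ : Measure X} (h : IsErgodic T μ) (hπ : Measurable π)
    (hsemi : Semiconj π T S) : IsErgodic S (μ.map π) := by
  intro A hA hinv
  rw [Measure.map_apply hπ hA]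
  refine h _ (hπ hA) ?_
  rw [← preimage_comp, hsemi.comp_eq, preimage_comp, hinv]

section Ergodicity

variable {d : ℕ} [NeZero d] {μ : Measure (ℤ → ZMod d)} {l r : ℤ} {lam : ℤ → ZMod d}

/-- The coefficients `∫_A χ_{F^n c}` do not depend on `n`, and the `χ_{F^n c}` are orthonormal
since the orbit of `c` is infinite. -/
lemma IsUniformBernoulli.setIntegral_character_eq_zero (hμ : IsUniformBernoulli d μ)
    (hsurj : Surjective (cellAuto d l r lam)) (hper : periodicPts (dualCA l r lam) ⊆ {0})
    {A : Set (ℤ → ZMod d)} (hA : MeasurableSet A) (hinv : cellAuto d l r lam ⁻¹' A = A)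
    {c : ℤ →₀ ZMod d} (hc : c ≠ 0) : ∫ x in A, character c x ∂μ = 0 := by
  have := hμ.1
  have hstep : ∀ c, ∫ x in A, character (dualCA l r lam c) x ∂μ = ∫ x in A, character c x ∂μ := by
    intro c
    have := setIntegral_map hA (measurable_character c).aestronglyMeasurable
      (measurable_cellAuto l r lam).aemeasurable (μ := μ)
    rw [hμ.map_cellAuto l r lam hsurj, hinv] at this
    simp_rw [this, character_cellAuto]
  have horbit := injective_iterate_of_notMem_periodicPts (dualCA_injective l r lam hsurj)
    fun h => hc (hper h)
  refine (hμ.orthonormal_characterLp.comp _ horbit).eq_zero_of_forall_inner_eq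
    (indicatorConstLp 2 hA (measure_ne_top μ A) (1 : ℂ)) fun n => ?_
  rw [comp_apply, inner_indicatorConstLp_characterLp]
  induction n with
  | zero => rfl
  | succ n ih => rw [iterate_succ_apply', hstep, ih]

theorem isErgodic_cellAuto_of_periodicPts_subset (hμ : IsUniformBernoulli d μ)
    (hsurj : Surjective (cellAuto d l r lam)) (hper : periodicPts (dualCA l r lam) ⊆ {0}) :
    IsErgodic (cellAuto d l r lam) μ := by
  have := hμ.1
  intro A hA hinv
  have hrestrict : μ.restrict A = μ A • μ := by
    have := μ.smul_finite (measure_ne_top μ A)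
    refine Measure.ext_of_integral_character fun c => ?_
    rw [integral_smul_measure, hμ.integral_character]
    split_ifs with hc
    · simp [hc, character_zero_left, measureReal_def]
    · rw [hμ.setIntegral_character_eq_zero hsurj hper hA hinv hc, smul_zero]
  have hidem : μ A * μ A = μ A := by
    simpa using (congrArg (· A) hrestrict).symm
  rcases eq_or_ne (μ A) 0 with h0 | h0
  · exact Or.inl h0
  · exact Or.inr ((ENNReal.mul_eq_left h0 (measure_ne_top μ A)).1 hidem)

/-- For a periodic `c ≠ 0` of period `n`, `g = ∑_{j < n} χ_{F^j c}` is invariant, hence a.e.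
constant, so `∫ g χ_{-c} = 0`; but this integral counts the `j < n` with `F^j c = c`. -/
theorem IsUniformBernoulli.periodicPts_dualCA_subset_of_isErgodic (hμ : IsUniformBernoulli d μ)
    (herg : IsErgodic (cellAuto d l r lam) μ) : periodicPts (dualCA l r lam) ⊆ {0} := by
  have := hμ.1
  rintro c ⟨n, hn, hper⟩
  by_contra hc
  set F := dualCA l r lam
  set g : (ℤ → ZMod d) → ℂ := fun x => ∑ j ∈ Finset.range n, character (F^[j] c) x
  have hg : g ∘ cellAuto d l r lam = g := by
    funext x
    have hshift := Finset.sum_range_succ' (fun j => character (F^[j] c) x) n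
    rw [Finset.sum_range_succ, hper.eq, iterate_zero_apply] at hshift
    simp only [g, comp_apply, character_cellAuto]
    exact (Finset.sum_congr rfl fun j _ => by rw [iterate_succ_apply']).trans
      (add_right_cancel hshift).symm
  obtain ⟨z, hz⟩ := herg.preErgodic.ae_eq_const_of_ae_eq_comp
    (Finset.measurable_sum _ fun j _ => measurable_character _) hg
  have hzero : ∫ x, g x * character (-c) x ∂μ = 0 := by
    have hae : ∀ᵐ x ∂μ, g x * character (-c) x = z * character (-c) x :=
      hz.mono fun x (hx : g x = z) => by rw [hx]
    rw [integral_congr_ae hae, integral_const_mul, hμ.integral_character,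
      if_neg (neg_ne_zero.2 hc), mul_zero]
  have hcount : ∫ x, g x * character (-c) x ∂μ =
      ((Finset.range n).filter fun j => F^[j] c = c).card := by
    simp_rw [g, Finset.sum_mul, ← character_add_left]
    rw [integral_finsetSum _ fun j _ => integrable_character _]
    simp_rw [hμ.integral_character, add_neg_eq_zero]
    rw [Finset.sum_boole]
  have hmem : 0 ∈ (Finset.range n).filter fun j => F^[j] c = c := by simp [hn]
  exact Finset.card_ne_zero_of_mem hmem (by exact_mod_cast hcount.symm.trans hzero)

end Ergodicity

lemma ZMod.exists_castHom_ordProj_ne_zero {m : ℕ} [NeZero m] {u : ZMod m} (hu : u ≠ 0) :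
    ∃ p ∈ m.primeFactors,
      ZMod.castHom (Nat.ordProj_dvd m p) (ZMod (p ^ m.factorization p)) u ≠ 0 := by
  by_contra! h
  apply hu
  rw [← ZMod.natCast_zmod_val u, ZMod.natCast_eq_zero_iff]
  rcases eq_or_ne u.val 0 with h0 | h0
  · simp [h0]
  refine (Nat.factorization_prime_le_iff_dvd (NeZero.ne m) h0).1 fun p hp => ?_
  by_cases hpm : p ∈ m.primeFactors
  · have := h p hpm
    rw [← ZMod.natCast_zmod_val u, map_natCast, ZMod.natCast_eq_zero_iff] at this
    exact (hp.pow_dvd_iff_le_factorization h0).1 this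
  · rw [Nat.factorization_eq_zero_of_not_dvd fun hdvd =>
      hpm (Nat.mem_primeFactors.2 ⟨hp, hdvd, NeZero.ne m⟩)]
    exact Nat.zero_le _

theorem periodicPts_dualCA_subset_of_primePow {m : ℕ} [NeZero m] {l r : ℤ} {lam : ℤ → ZMod m}
    (h : ∀ p ∈ m.primeFactors, periodicPts (dualCA l r fun i =>
      ZMod.castHom (Nat.ordProj_dvd m p) (ZMod (p ^ m.factorization p)) (lam i)) ⊆ {0}) :
    periodicPts (dualCA l r lam) ⊆ {0} := by
  rintro c ⟨n, hn, hper⟩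
  by_contra hc
  obtain ⟨i, hi⟩ : ∃ i, c i ≠ 0 := by
    by_contra! h
    exact hc (Finsupp.ext h)
  obtain ⟨p, hp, hpi⟩ := ZMod.exists_castHom_ordProj_ne_zero hi
  have hred := h p hp
    ⟨n, hn, hper.map (semiconj_reduceModCoeff_dualCA l r (Nat.ordProj_dvd m p) lam)⟩
  exact hpi (DFunLike.congr_fun hred i)

theorem ergodic_iff_forall_primePow_general
    (m : ℕ) (hm : 2 ≤ m) (l r : ℤ) (lam : ℤ → ZMod m)
    (hsurj : Function.Surjective (cellAuto m l r lam))
    (μ : Measure (ℤ → ZMod m)) (hμ : IsUniformBernoulli m μ) :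
    IsErgodic (cellAuto m l r lam) μ ↔
      ∀ p ∈ m.primeFactors,
        ∀ μp : Measure (ℤ → ZMod (p ^ m.factorization p)),
          IsUniformBernoulli (p ^ m.factorization p) μp →
          IsErgodic
            (cellAuto (p ^ m.factorization p) l r
              (fun i => ZMod.castHom (Nat.ordProj_dvd m p)
                (ZMod (p ^ m.factorization p)) (lam i)))
            μp := by
  have : NeZero m := ⟨by omega⟩
  have hq : ∀ p ∈ m.primeFactors, NeZero (p ^ m.factorization p) := fun p hp =>
    ⟨pow_ne_zero _ (Nat.prime_of_mem_primeFactors hp).ne_zero⟩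
  constructor
  · intro herg p hp μp hμp
    have := hq p hp
    rw [← (hμ.map_reduceMod (Nat.ordProj_dvd m p)).unique hμp]
    exact herg.of_semiconj (measurable_reduceMod _) (semiconj_reduceMod_cellAuto l r _ lam)
  · intro hall
    refine isErgodic_cellAuto_of_periodicPts_subset hμ hsurj
      (periodicPts_dualCA_subset_of_primePow fun p hp => ?_)
    have := hq p hp
    have hμp := hμ.map_reduceMod (Nat.ordProj_dvd m p)
    exact hμp.periodicPts_dualCA_subset_of_isErgodic (hall p hp _ hμp)

/-- Writing `m = p_1^{k_1} ⋯ p_h^{k_h}` for its prime factorization, a surjective linear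
cellular automaton `T_f` over `ZMod m` is ergodic for the uniform Bernoulli measure
iff, for every prime factor `p_i` of `m`, the cellular automaton over `ZMod p_i^{k_i}`
whose local rule is `f` reduced mod `p_i^{k_i}` is ergodic for the uniform
Bernoulli measure on `(ZMod p_i^{k_i})^ℤ`. -/
theorem ergodic_iff_forall_primePow
    (m : ℕ) (hm : 2 ≤ m) (l r : ℤ) (hlr : l ≤ r) (lam : ℤ → ZMod m)
    (hsurj : Function.Surjective (cellAuto m l r lam))
    (μ : Measure (ℤ → ZMod m)) (hμ : IsUniformBernoulli m μ) :
    IsErgodic (cellAuto m l r lam) μ ↔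
      ∀ p ∈ m.primeFactors,
        ∀ μp : Measure (ℤ → ZMod (p ^ m.factorization p)),
          IsUniformBernoulli (p ^ m.factorization p) μp →
          IsErgodic
            (cellAuto (p ^ m.factorization p) l r
              (fun i => ZMod.castHom (Nat.ordProj_dvd m p)
                (ZMod (p ^ m.factorization p)) (lam i)))
            μp :=
  ergodic_iff_forall_primePow_general m hm l r lam hsurj μ hμ
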